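/- arXiv:1508.00219 — 5 statements merged into one kernel-verified Lean document; each statement's English description precedes it below -/
import Mathlib

section
/- Let 0 < y1 < y2 and set K = (1−e^{−λ y1})^{α1+α3}·(1−e^{−λ y2})^{α2}. Then the mixed second partial derivative ∂²/∂y1 ∂y2 of the function (y1, y2) ↦ C(θ·(1−e^{−λ y1})^{α1+α3}·(1−e^{−λ y2})^{α2}) / C(θ) equals f1(y1, y2) = (θ / C(θ)) · f_GE(y1; α1+α3, λ) · f_GE(y2; α2, λ) · [ θ K · C''(θ K) + C'(θ K) ], where C' and C'' denote the first and second derivatives of C. -/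
/-!
Write the cdf as `C(u(y₁) v(y₂)) / C(θ)` with `u = θ F_GE(·; α₁ + α₃, λ)` and
`v = F_GE(·; α₂, λ)`. Since GE cdfs take values in `(0, 1)`, the argument `u v` stays in
`(0, θ)`, inside the disc of convergence, where `C` is analytic. Differentiating in `y₂` gives
`C'(u v) u v'`; differentiating that in `y₁` by the product rule gives
`u' v' (u v C''(u v) + C'(u v))`, and the derivatives of the GE cdfs are the GE densities.
-/

open Real Filter

/-- The generalized exponential pdf `f_GE(x; α, λ) = α λ e^{-λx} (1-e^{-λx})^{α-1}`. -/
noncomputable def fGE (x α lam : ℝ) : ℝ :=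
  α * lam * Real.exp (-lam * x) * (1 - Real.exp (-lam * x)) ^ (α - 1)

open Topology

open FormalMultilinearSeries in
theorem analyticOnNhd_tsum_mul_pow {b : ℕ → ℝ} {r : NNReal}
    (hs : Summable fun n => |b n| * (r : ℝ) ^ n) :
    AnalyticOnNhd ℝ (fun x => ∑' n, b n * x ^ n) (Metric.ball 0 r) := by
  have hsum : ofScalarsSum b = fun x : ℝ => ∑' n, b n * x ^ n := by
    simp only [ofScalarsSum_eq_tsum, smul_eq_mul]
  have hr : (r : ENNReal) ≤ (ofScalars ℝ b).radius :=
    (ofScalars ℝ b).le_radius_of_summable_norm (by simpa only [ofScalars_norm, Real.norm_eq_abs])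
  rw [← hsum, ← Metric.eball_coe]
  exact (ofScalars ℝ b).analyticOnNhd.mono (Metric.eball_subset_eball hr)

theorem analyticOnNhd_of_eq_tsum_succ {a : ℕ → ℝ} {C : ℝ → ℝ} {r : ℝ} (hr : 0 < r)
    (hs : Summable fun n => |a (n + 1)| * r ^ (n + 1))
    (hC : ∀ x, C x = ∑' n, a (n + 1) * x ^ (n + 1)) :
    AnalyticOnNhd ℝ C (Metric.ball 0 r) := by
  have hC' : C = fun x => x * ∑' n, a (n + 1) * x ^ n := by
    funext x
    rw [hC, ← tsum_mul_left]
    exact tsum_congr fun n => by ring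
  have hs' : Summable fun n => |a (n + 1)| * (r.toNNReal : ℝ) ^ n := by
    rw [Real.coe_toNNReal _ hr.le]
    refine (summable_mul_left_iff hr.ne').mp (hs.congr fun n => ?_)
    ring
  rw [hC', ← Real.coe_toNNReal _ hr.le]
  exact analyticOnNhd_id.mul (analyticOnNhd_tsum_mul_pow hs')

noncomputable def geCdf (x α lam : ℝ) : ℝ := (1 - Real.exp (-lam * x)) ^ α

section GeneralizedExponential

variable {x α lam : ℝ}

theorem one_sub_exp_neg_mul_mem_Ioo (hlam : 0 < lam) (hx : 0 < x) :
    1 - Real.exp (-lam * x) ∈ Set.Ioo 0 1 := by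
  constructor
  · have : Real.exp (-lam * x) < 1 := Real.exp_lt_one_iff.mpr (by nlinarith)
    linarith
  · linarith [Real.exp_pos (-lam * x)]

theorem geCdf_mem_Ioo (hα : 0 < α) (hlam : 0 < lam) (hx : 0 < x) :
    geCdf x α lam ∈ Set.Ioo 0 1 := by
  obtain ⟨h0, h1⟩ := one_sub_exp_neg_mul_mem_Ioo hlam hx
  exact ⟨Real.rpow_pos_of_pos h0 α, Real.rpow_lt_one h0.le h1 hα⟩

theorem hasDerivAt_geCdf (hlam : 0 < lam) (hx : 0 < x) :
    HasDerivAt (fun t => geCdf t α lam) (fGE x α lam) x := by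
  have hexp : HasDerivAt (fun t => 1 - Real.exp (-lam * t)) (lam * Real.exp (-lam * x)) x := by
    have := (((hasDerivAt_id' x).const_mul (-lam)).exp).const_sub 1
    exact this.congr_deriv (by ring)
  have hbase := (one_sub_exp_neg_mul_mem_Ioo hlam hx).1
  refine ((Real.hasDerivAt_rpow_const (p := α) (Or.inl hbase.ne')).comp x hexp).congr_deriv ?_
  simp only [fGE]
  ring

end GeneralizedExponential

theorem deriv_deriv_comp_mul {F u v : ℝ → ℝ} {u' v' y1 y2 : ℝ}
    (hu : HasDerivAt u u' y1) (hv : HasDerivAt v v' y2)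
    (hF : ∀ᶠ t in 𝓝 y1, DifferentiableAt ℝ F (u t * v y2))
    (hF' : DifferentiableAt ℝ (deriv F) (u y1 * v y2)) :
    deriv (fun t1 => deriv (fun t2 => F (u t1 * v t2)) y2) y1 =
      u' * v' * (u y1 * v y2 * deriv (deriv F) (u y1 * v y2) + deriv F (u y1 * v y2)) := by
  have hinner : (fun t1 => deriv (fun t2 => F (u t1 * v t2)) y2) =ᶠ[𝓝 y1]
      fun t1 => deriv F (u t1 * v y2) * (u t1 * v') := by
    filter_upwards [hF] with t ht
    exact (ht.hasDerivAt.comp y2 (hv.const_mul (u t))).deriv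
  rw [hinner.deriv_eq]
  have hcomp := hF'.hasDerivAt.comp y1 (hu.mul_const (v y2))
  refine (hcomp.mul (hu.mul_const v')).deriv.trans ?_
  simp only [Function.comp_apply]
  ring

theorem stmt_3_general (a : ℕ → ℝ)
    (θ : ℝ) (hθ : 0 < θ)
    (hrad : ∃ r : ℝ, θ < r ∧ Summable fun n : ℕ => |a (n + 1)| * r ^ (n + 1))
    (C : ℝ → ℝ) (hC : ∀ x : ℝ, C x = ∑' n : ℕ, a (n + 1) * x ^ (n + 1))
    (α1 α2 α3 lam : ℝ) (hα1 : 0 < α1) (hα2 : 0 < α2) (hα3 : 0 < α3) (hlam : 0 < lam)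
    (y1 y2 : ℝ) (hy1 : 0 < y1) (h12 : y1 < y2)
    (K : ℝ) (hK : K = (1 - Real.exp (-lam * y1)) ^ (α1 + α3) * (1 - Real.exp (-lam * y2)) ^ α2) :
    deriv (fun t1 : ℝ =>
        deriv (fun t2 : ℝ =>
            C (θ * (1 - Real.exp (-lam * t1)) ^ (α1 + α3) * (1 - Real.exp (-lam * t2)) ^ α2) /
              C θ) y2) y1 =
      θ / C θ * fGE y1 (α1 + α3) lam * fGE y2 α2 lam *
        (θ * K * deriv (deriv C) (θ * K) + deriv C (θ * K)) := by
  obtain ⟨r, hθr, hs⟩ := hrad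
  have hAn := analyticOnNhd_of_eq_tsum_succ (hθ.trans hθr) hs hC
  have hy2 : 0 < y2 := hy1.trans h12
  have hball : ∀ t, 0 < t → θ * geCdf t (α1 + α3) lam * geCdf y2 α2 lam ∈ Metric.ball 0 r := by
    intro t ht
    obtain ⟨p1, q1⟩ := geCdf_mem_Ioo (add_pos hα1 hα3) hlam ht
    obtain ⟨p2, q2⟩ := geCdf_mem_Ioo hα2 hlam hy2
    rw [mem_ball_zero_iff, Real.norm_eq_abs, abs_of_pos (by positivity)]
    nlinarith [mul_lt_one_of_nonneg_of_lt_one_left p1.le q1 q2.le]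
  -- `u t1 * v t2` below unfolds to the argument of `C` in the goal.
  have hmixed := deriv_deriv_comp_mul (F := C) (u := fun t => θ * geCdf t (α1 + α3) lam)
    ((hasDerivAt_geCdf hlam hy1).const_mul θ) (hasDerivAt_geCdf (α := α2) hlam hy2)
    (by filter_upwards [Ioi_mem_nhds hy1] with t ht using (hAn _ (hball t ht)).differentiableAt)
    (hAn.deriv _ (hball y1 hy1)).differentiableAt
  have hKθ : θ * geCdf y1 (α1 + α3) lam * geCdf y2 α2 lam = θ * K := by
    rw [hK, mul_assoc]; rfl
  simp only [deriv_div_const]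
  refine (congrArg (· / C θ) hmixed).trans ?_
  simp only [hKθ]
  ring

/-- The absolutely continuous part `f1` of the BGEPS density on `{y1 < y2}` is the mixed
second partial derivative of the cdf:
`∂²/∂y1∂y2 [C(θ (1-e^{-λ y1})^{α1+α3} (1-e^{-λ y2})^{α2}) / C(θ)]
  = (θ/C(θ)) f_GE(y1; α1+α3, λ) f_GE(y2; α2, λ) (θ K C''(θK) + C'(θK))`. -/
theorem stmt_3 (a : ℕ → ℝ) (ha : ∀ n, 0 ≤ a n) (hne : ∃ n : ℕ, 0 < a (n + 1))
    (θ : ℝ) (hθ : 0 < θ)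
    (hrad : ∃ r : ℝ, θ < r ∧ Summable fun n : ℕ => |a (n + 1)| * r ^ (n + 1))
    (C : ℝ → ℝ) (hC : ∀ x : ℝ, C x = ∑' n : ℕ, a (n + 1) * x ^ (n + 1))
    (hCθ : 0 < C θ)
    (α1 α2 α3 lam : ℝ) (hα1 : 0 < α1) (hα2 : 0 < α2) (hα3 : 0 < α3) (hlam : 0 < lam)
    (y1 y2 : ℝ) (hy1 : 0 < y1) (h12 : y1 < y2)
    (K : ℝ) (hK : K = (1 - Real.exp (-lam * y1)) ^ (α1 + α3) * (1 - Real.exp (-lam * y2)) ^ α2) :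
    deriv (fun t1 : ℝ =>
        deriv (fun t2 : ℝ =>
            C (θ * (1 - Real.exp (-lam * t1)) ^ (α1 + α3) * (1 - Real.exp (-lam * t2)) ^ α2) /
              C θ) y2) y1 =
      θ / C θ * fGE y1 (α1 + α3) lam * fGE y2 α2 lam *
        (θ * K * deriv (deriv C) (θ * K) + deriv C (θ * K)) :=
  stmt_3_general a θ hθ hrad C hC α1 α2 α3 lam hα1 hα2 hα3 hlam y1 y2 hy1 h12 K hK
end

section
/- Let y1, y2 > 0 and set K = (1−e^{−λ y1})^{α1+α3}·(1−e^{−λ y2})^{α2}. Then (θ / C(θ)) · f_GE(y1; α1+α3, λ) · f_GE(y2; α2, λ) · [ θ K · C''(θ K) + C'(θ K) ] = Σ_{n=1}^∞ (a_n θ^n / C(θ)) · f_GE(y1; n(α1+α3), λ) · f_GE(y2; n α2, λ), where the series on the right converges. -/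
/-!
By `f_GE(y; nα, λ) = n f_GE(y; α, λ) F(y)^{(n-1)α}` with `F(y) = 1 - e^{-λy}`, the `n`-th term of
the series is `(θ / C θ) f_GE(y₁) f_GE(y₂) · n² a_n (θK)^{n-1}`. On the other hand
`x C''(x) + C'(x) = (x C'(x))' = Σ n² a_n x^{n-1}` by termwise differentiation inside the disc of
convergence, which contains `θK` because `0 ≤ K ≤ 1`.
-/

open Real Filter

open Topology

section PowerSeries

variable {c : ℕ → ℝ} {r x : ℝ}

theorem summable_mul_pow_of_abs_le (hc : Summable fun n => |c n| * r ^ n) (hx : |x| ≤ r) :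
    Summable fun n => c n * x ^ n :=
  .of_norm_bounded hc fun n => by
    rw [norm_mul, norm_pow, Real.norm_eq_abs, Real.norm_eq_abs]
    exact mul_le_mul_of_nonneg_left (pow_le_pow_left₀ (abs_nonneg x) hx n) (abs_nonneg _)

theorem summable_abs_succ_mul_mul_pow (hc : Summable fun n => |c n| * r ^ n) {ρ : ℝ}
    (hρ : 0 ≤ ρ) (hρr : ρ < r) :
    Summable fun n : ℕ => |((n : ℝ) + 1) * c (n + 1)| * ρ ^ n := by
  have hr : 0 < r := hρ.trans_lt hρr
  obtain ⟨M, hM⟩ := hc.tendsto_atTop_zero.bddAbove_range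
  have hq : ‖ρ / r‖ < 1 := by
    rw [Real.norm_of_nonneg (by positivity), div_lt_one hr]
    exact hρr
  have hgeom : Summable fun n : ℕ => ((n : ℝ) + 1) * (ρ / r) ^ n :=
    ((summable_pow_mul_geometric_of_norm_lt_one 1 hq).add
      (summable_geometric_of_norm_lt_one hq)).congr fun n => by ring
  refine .of_nonneg_of_le (fun n => by positivity) (fun n => ?_) (hgeom.mul_right (M / r))
  calc |((n : ℝ) + 1) * c (n + 1)| * ρ ^ n
      = ((n : ℝ) + 1) * (ρ / r) ^ n * (|c (n + 1)| * r ^ (n + 1) / r) := by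
        rw [abs_mul, abs_of_pos (by positivity), div_pow]
        field_simp
        ring
    _ ≤ ((n : ℝ) + 1) * (ρ / r) ^ n * (M / r) := by
        gcongr
        exact hM ⟨n + 1, rfl⟩

theorem hasDerivAt_tsum_mul_pow (hc : Summable fun n => |c n| * r ^ n) (hx : |x| < r) :
    HasDerivAt (fun z => ∑' n, c n * z ^ n) (∑' n : ℕ, ((n : ℝ) + 1) * c (n + 1) * x ^ n) x := by
  obtain ⟨ρ, hxρ, hρr⟩ := exists_between hx
  have hxs : x ∈ Metric.ball 0 ρ := by rwa [mem_ball_zero_iff, Real.norm_eq_abs]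
  have hu : Summable fun n : ℕ => |(n : ℝ) * c n| * ρ ^ (n - 1) := by
    refine (summable_nat_add_iff 1).mp ?_
    simpa using summable_abs_succ_mul_mul_pow hc ((abs_nonneg x).trans hxρ.le) hρr
  have hderiv := hasDerivAt_tsum_of_isPreconnected (g := fun n z => c n * z ^ n)
    (g' := fun n z => c n * ((n : ℝ) * z ^ (n - 1))) hu Metric.isOpen_ball
    (convex_ball 0 ρ).isPreconnected (fun n z _ => (hasDerivAt_pow n z).const_mul (c n))
    (fun n z hz => ?_) hxs (summable_mul_pow_of_abs_le hc hx.le) hxs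
  · refine hderiv.congr_deriv (((tsum_pnat_eq_tsum_of_eq_zero (by simp)).symm.trans
      tsum_pnat_eq_tsum_succ).trans ?_)
    congr 1 with n
    push_cast
    ring
  · rw [mem_ball_zero_iff, Real.norm_eq_abs] at hz
    rw [norm_mul, norm_mul, norm_pow, Real.norm_eq_abs, Real.norm_eq_abs, Real.norm_eq_abs,
      abs_mul]
    calc |c n| * (|(n : ℝ)| * |z| ^ (n - 1)) = |(n : ℝ)| * |c n| * |z| ^ (n - 1) := by ring
      _ ≤ |(n : ℝ)| * |c n| * ρ ^ (n - 1) := by gcongr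

theorem hasSum_mul_deriv_deriv_add_deriv (hc : Summable fun n => |c n| * r ^ n) (hx : |x| < r) :
    HasSum (fun n : ℕ => ((n : ℝ) + 1) ^ 2 * c (n + 1) * x ^ n)
      (x * deriv (deriv fun z => ∑' n, c n * z ^ n) x + deriv (fun z => ∑' n, c n * z ^ n) x) := by
  set d : ℕ → ℝ := fun n => ((n : ℝ) + 1) * c (n + 1)
  obtain ⟨ρ, hxρ, hρr⟩ := exists_between hx
  have hd : Summable fun n => |d n| * ρ ^ n :=
    summable_abs_succ_mul_mul_pow hc ((abs_nonneg x).trans hxρ.le) hρr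
  have hderiv : deriv (fun z => ∑' n, c n * z ^ n) =ᶠ[𝓝 x] fun z => ∑' n, d n * z ^ n :=
    eventually_of_mem ((isOpen_lt continuous_abs continuous_const).mem_nhds hx) fun z hz =>
      (hasDerivAt_tsum_mul_pow hc hz).deriv
  rw [hderiv.deriv_eq, hderiv.eq_of_nhds, (hasDerivAt_tsum_mul_pow hd hxρ).deriv]
  have hsum_d : HasSum (fun n => d n * x ^ n) (∑' n, d n * x ^ n) :=
    (summable_mul_pow_of_abs_le hd hxρ.le).hasSum
  have hsum_nd : HasSum (fun n : ℕ => n * d n * x ^ n)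
      (x * ∑' n : ℕ, ((n : ℝ) + 1) * d (n + 1) * x ^ n) := by
    have hshift : (fun n : ℕ => ((n + 1 : ℕ) : ℝ) * d (n + 1) * x ^ (n + 1))
        = fun n : ℕ => x * (((n : ℝ) + 1) * d (n + 1) * x ^ n) := by
      funext n
      push_cast
      ring
    rw [← hasSum_nat_add_iff' 1, Finset.sum_range_one, Nat.cast_zero, zero_mul, zero_mul,
      sub_zero, hshift]
    exact (summable_mul_pow_of_abs_le
      (summable_abs_succ_mul_mul_pow hd (abs_nonneg x) hxρ) le_rfl).hasSum.mul_left x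
  exact (hsum_nd.add hsum_d).congr_fun fun n => by ring

end PowerSeries

theorem one_sub_exp_neg_mul_pos {lam y : ℝ} (h : 0 < lam * y) : 0 < 1 - exp (-lam * y) := by
  rw [sub_pos, Real.exp_lt_one_iff, neg_mul, neg_lt_zero]
  exact h

theorem fGE_succ_mul {y α lam : ℝ} (h : 0 < lam * y) (n : ℕ) :
    fGE y (((n : ℝ) + 1) * α) lam
      = ((n : ℝ) + 1) * fGE y α lam * ((1 - exp (-lam * y)) ^ α) ^ n := by
  have hu := one_sub_exp_neg_mul_pos h
  rw [fGE, fGE, show ((n : ℝ) + 1) * α - 1 = (α - 1) + α * n by ring, rpow_add hu,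
    rpow_mul hu.le, rpow_natCast]
  ring

theorem stmt_5_general (a : ℕ → ℝ)
    (θ : ℝ) (hθ : 0 < θ)
    (hrad : ∃ r : ℝ, θ < r ∧ Summable fun n : ℕ => |a (n + 1)| * r ^ (n + 1))
    (C : ℝ → ℝ) (hC : ∀ x : ℝ, C x = ∑' n : ℕ, a (n + 1) * x ^ (n + 1))
    (α1 α2 α3 lam : ℝ) (hα1 : 0 < α1) (hα2 : 0 < α2) (hα3 : 0 < α3) (hlam : 0 < lam)
    (y1 y2 : ℝ) (hy1 : 0 < y1) (hy2 : 0 < y2)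
    (K : ℝ) (hK : K = (1 - Real.exp (-lam * y1)) ^ (α1 + α3) * (1 - Real.exp (-lam * y2)) ^ α2) :
    HasSum
      (fun n : ℕ =>
        a (n + 1) * θ ^ (n + 1) / C θ *
          fGE y1 (((n : ℝ) + 1) * (α1 + α3)) lam * fGE y2 (((n : ℝ) + 1) * α2) lam)
      (θ / C θ * fGE y1 (α1 + α3) lam * fGE y2 α2 lam *
        (θ * K * deriv (deriv C) (θ * K) + deriv C (θ * K))) := by
  obtain ⟨r, hθr, hsum⟩ := hrad
  -- `C` never sees `a 0`; zeroing it makes `C` the power series with coefficients `c`.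
  set c := Function.update a 0 0
  have hc : Summable fun n => |c n| * r ^ n :=
    (summable_nat_add_iff 1).mp (by simpa [c] using hsum)
  have hCc : C = fun z => ∑' n, c n * z ^ n := funext fun z =>
    (hC z).trans ((tsum_pnat_eq_tsum_succ (f := fun n => c n * z ^ n)).symm.trans
      (tsum_pnat_eq_tsum_of_eq_zero (f := fun n => c n * z ^ n) (by simp [c])))
  have hy1' : 0 < lam * y1 := mul_pos hlam hy1
  have hy2' : 0 < lam * y2 := mul_pos hlam hy2
  have hu1 := one_sub_exp_neg_mul_pos hy1'
  have hu2 := one_sub_exp_neg_mul_pos hy2'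
  have hK0 : 0 ≤ K := hK ▸ mul_nonneg (rpow_nonneg hu1.le _) (rpow_nonneg hu2.le _)
  have hK1 : K ≤ 1 := hK ▸ mul_le_one₀
    (rpow_le_one hu1.le (sub_le_self _ (exp_pos _).le) (by positivity)) (rpow_nonneg hu2.le _)
    (rpow_le_one hu2.le (sub_le_self _ (exp_pos _).le) hα2.le)
  have hθK : |θ * K| < r := by
    rw [abs_of_nonneg (by positivity)]
    nlinarith
  have key := (hasSum_mul_deriv_deriv_add_deriv hc hθK).mul_left
    (θ / C θ * fGE y1 (α1 + α3) lam * fGE y2 α2 lam)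
  rw [← hCc] at key
  refine key.congr_fun fun n => ?_
  rw [fGE_succ_mul hy1', fGE_succ_mul hy2', hK, mul_pow, mul_pow]
  simp only [c, Function.update_of_ne n.succ_ne_zero]
  ring

/-- Series representation of the density `f1`:
`(θ/C(θ)) f_GE(y1; α1+α3, λ) f_GE(y2; α2, λ) (θ K C''(θK) + C'(θK))
  = Σ_{n≥1} (a_n θ^n / C(θ)) f_GE(y1; n(α1+α3), λ) f_GE(y2; n α2, λ)`. -/
theorem stmt_5 (a : ℕ → ℝ) (ha : ∀ n, 0 ≤ a n) (hne : ∃ n : ℕ, 0 < a (n + 1))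
    (θ : ℝ) (hθ : 0 < θ)
    (hrad : ∃ r : ℝ, θ < r ∧ Summable fun n : ℕ => |a (n + 1)| * r ^ (n + 1))
    (C : ℝ → ℝ) (hC : ∀ x : ℝ, C x = ∑' n : ℕ, a (n + 1) * x ^ (n + 1))
    (hCθ : 0 < C θ)
    (α1 α2 α3 lam : ℝ) (hα1 : 0 < α1) (hα2 : 0 < α2) (hα3 : 0 < α3) (hlam : 0 < lam)
    (y1 y2 : ℝ) (hy1 : 0 < y1) (hy2 : 0 < y2)
    (K : ℝ) (hK : K = (1 - Real.exp (-lam * y1)) ^ (α1 + α3) * (1 - Real.exp (-lam * y2)) ^ α2) :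
    HasSum
      (fun n : ℕ =>
        a (n + 1) * θ ^ (n + 1) / C θ *
          fGE y1 (((n : ℝ) + 1) * (α1 + α3)) lam * fGE y2 (((n : ℝ) + 1) * α2) lam)
      (θ / C θ * fGE y1 (α1 + α3) lam * fGE y2 α2 lam *
        (θ * K * deriv (deriv C) (θ * K) + deriv C (θ * K))) :=
  stmt_5_general a θ hθ hrad C hC α1 α2 α3 lam hα1 hα2 hα3 hlam y1 y2 hy1 hy2 K hK
end

section
/- Let y > 0 and write s = α1+α2+α3. Then (θ α3 / (C(θ) s)) · f_GE(y; s, λ) · C'(θ·(1−e^{−λ y})^s) = (α3 / s) · Σ_{n=1}^∞ (a_n θ^n / C(θ)) · f_GE(y; n s, λ), where the series on the right converges. (Series representation of the singular part f0 of the BGEPS density.) -/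
open Real Filter

/-!
With `t = 1 - e^{-λy} ∈ (0, 1)` one has `f_GE(y; (n+1)s, λ) = (n+1) f_GE(y; s, λ) (t^s)^n`, so the
right-hand series is a constant multiple of the termwise derivative `∑ (n+1) a_{n+1} x^n` of `C`
at `x = θ t^s`. Since `0 < x < θ` lies inside the disc of convergence, that series converges to
`C'(x)`.
-/

section PowerSeries

variable {a : ℕ → ℝ} {r : ℝ}

lemma summable_succ_mul_abs_mul_pow (hsum : Summable fun n : ℕ => |a (n + 1)| * r ^ (n + 1))
    {ρ : ℝ} (hρ : 0 ≤ ρ) (hρr : ρ < r) :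
    Summable fun n : ℕ => ((n : ℝ) + 1) * |a (n + 1)| * ρ ^ n := by
  have hr : 0 < r := hρ.trans_lt hρr
  set T := ∑' n : ℕ, |a (n + 1)| * r ^ (n + 1)
  have hq : ‖ρ / r‖ < 1 := by
    rw [Real.norm_eq_abs, abs_of_nonneg (by positivity), div_lt_one hr]
    exact hρr
  have hgeom : Summable fun n : ℕ => ((n : ℝ) + 1) * (ρ / r) ^ n :=
    ((summable_pow_mul_geometric_of_norm_lt_one 1 hq).add
      (summable_geometric_of_norm_lt_one hq)).congr fun n => by ring
  -- `|a (n+1)| r^(n+1) ≤ T` dominates the derived series by a multiple of `∑ (n+1) (ρ/r)^n`.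
  refine (hgeom.mul_left (T / r)).of_nonneg_of_le (fun n => by positivity) fun n => ?_
  have hcoeff : |a (n + 1)| ≤ T / r ^ (n + 1) := by
    rw [le_div_iff₀ (by positivity)]
    exact hsum.le_tsum n fun m _ => by positivity
  calc ((n : ℝ) + 1) * |a (n + 1)| * ρ ^ n
      ≤ ((n : ℝ) + 1) * (T / r ^ (n + 1)) * ρ ^ n := by gcongr
    _ = T / r * (((n : ℝ) + 1) * (ρ / r) ^ n) := by
      rw [div_pow, pow_succ]
      field_simp

lemma hasSum_deriv_tsum_mul_pow_succ (hsum : Summable fun n : ℕ => |a (n + 1)| * r ^ (n + 1))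
    {x : ℝ} (hx : |x| < r) :
    HasSum (fun n : ℕ => ((n : ℝ) + 1) * a (n + 1) * x ^ n)
      (deriv (fun z => ∑' n : ℕ, a (n + 1) * z ^ (n + 1)) x) := by
  set ρ := (|x| + r) / 2
  have hxρ : |x| < ρ := by simp only [ρ]; linarith
  have hρr : ρ < r := by simp only [ρ]; linarith
  have hbound : ∀ n : ℕ, ∀ z ∈ Metric.ball (0 : ℝ) ρ,
      ‖((n : ℝ) + 1) * a (n + 1) * z ^ n‖ ≤ ((n : ℝ) + 1) * |a (n + 1)| * ρ ^ n := by
    intro n z hz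
    rw [mem_ball_zero_iff, Real.norm_eq_abs] at hz
    rw [Real.norm_eq_abs, abs_mul, abs_mul, abs_pow, abs_of_nonneg (by positivity : (0 : ℝ) ≤ n + 1)]
    gcongr
  have hu := summable_succ_mul_abs_mul_pow hsum ((abs_nonneg x).trans hxρ.le) hρr
  have hxmem : x ∈ Metric.ball (0 : ℝ) ρ := by rwa [mem_ball_zero_iff, Real.norm_eq_abs]
  have hderiv := hasDerivAt_tsum_of_isPreconnected hu Metric.isOpen_ball
    (convex_ball (0 : ℝ) ρ).isPreconnected
    (fun n z _ => ((hasDerivAt_pow (n + 1) z).const_mul (a (n + 1))).congr_deriv (by push_cast; ring))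
    hbound (Metric.mem_ball_self ((abs_nonneg x).trans_lt hxρ)) (by simp) hxmem
  rw [hderiv.deriv]
  exact (Summable.of_norm_bounded hu fun n => hbound n x hxmem).hasSum

end PowerSeries

lemma fGE_natCast_succ_mul {x lam : ℝ} (hx : 0 < lam * x) (s : ℝ) (n : ℕ) :
    fGE x (((n : ℝ) + 1) * s) lam
      = ((n : ℝ) + 1) * fGE x s lam * ((1 - Real.exp (-lam * x)) ^ s) ^ n := by
  have ht : 0 < 1 - Real.exp (-lam * x) := by
    rw [sub_pos, Real.exp_lt_one_iff]
    linarith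
  have hpow : (1 - Real.exp (-lam * x)) ^ (((n : ℝ) + 1) * s - 1)
      = (1 - Real.exp (-lam * x)) ^ (s - 1) * ((1 - Real.exp (-lam * x)) ^ s) ^ n := by
    rw [← Real.rpow_natCast, ← Real.rpow_mul ht.le, ← Real.rpow_add ht]
    ring_nf
  simp only [fGE, hpow]
  ring

theorem stmt_6_general (a : ℕ → ℝ)
    (θ : ℝ) (hθ : 0 < θ)
    (hrad : ∃ r : ℝ, θ < r ∧ Summable fun n : ℕ => |a (n + 1)| * r ^ (n + 1))
    (C : ℝ → ℝ) (hC : ∀ x : ℝ, C x = ∑' n : ℕ, a (n + 1) * x ^ (n + 1))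
    (α1 α2 α3 lam : ℝ) (hα1 : 0 < α1) (hα2 : 0 < α2) (hα3 : 0 < α3) (hlam : 0 < lam)
    (y : ℝ) (hy : 0 < y)
    (s : ℝ) (hs : s = α1 + α2 + α3) :
    HasSum
      (fun n : ℕ =>
        α3 / s * (a (n + 1) * θ ^ (n + 1) / C θ * fGE y (((n : ℝ) + 1) * s) lam))
      (θ * α3 / (C θ * s) * fGE y s lam * deriv C (θ * (1 - Real.exp (-lam * y)) ^ s)) := by
  obtain ⟨r, hθr, hsum⟩ := hrad
  have hly : 0 < lam * y := mul_pos hlam hy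
  set t := 1 - Real.exp (-lam * y)
  have ht0 : 0 ≤ t := by
    rw [sub_nonneg, Real.exp_le_one_iff]
    linarith
  have ht1 : t ≤ 1 := by linarith [Real.exp_pos (-lam * y)]
  have hts : t ^ s ≤ 1 := Real.rpow_le_one ht0 ht1 (by linarith)
  have hx : |θ * t ^ s| < r := by
    rw [abs_of_nonneg (by positivity)]
    nlinarith
  rw [show C = fun z => ∑' n : ℕ, a (n + 1) * z ^ (n + 1) from funext hC]
  refine ((hasSum_deriv_tsum_mul_pow_succ hsum hx).mul_left _).congr_fun fun n => ?_
  rw [fGE_natCast_succ_mul hly, mul_pow]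
  ring

/-- Series representation of the singular part `f0` of the BGEPS density: with
`s = α1+α2+α3`, for `y > 0`,
`(θ α3/(C(θ) s)) f_GE(y; s, λ) C'(θ (1-e^{-λ y})^s)
  = (α3/s) Σ_{n≥1} (a_n θ^n / C(θ)) f_GE(y; n s, λ)`. -/
theorem stmt_6 (a : ℕ → ℝ) (ha : ∀ n, 0 ≤ a n) (hne : ∃ n : ℕ, 0 < a (n + 1))
    (θ : ℝ) (hθ : 0 < θ)
    (hrad : ∃ r : ℝ, θ < r ∧ Summable fun n : ℕ => |a (n + 1)| * r ^ (n + 1))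
    (C : ℝ → ℝ) (hC : ∀ x : ℝ, C x = ∑' n : ℕ, a (n + 1) * x ^ (n + 1))
    (hCθ : 0 < C θ)
    (α1 α2 α3 lam : ℝ) (hα1 : 0 < α1) (hα2 : 0 < α2) (hα3 : 0 < α3) (hlam : 0 < lam)
    (y : ℝ) (hy : 0 < y)
    (s : ℝ) (hs : s = α1 + α2 + α3) :
    HasSum
      (fun n : ℕ =>
        α3 / s * (a (n + 1) * θ ^ (n + 1) / C θ * fGE y (((n : ℝ) + 1) * s) lam))
      (θ * α3 / (C θ * s) * fGE y s lam * deriv C (θ * (1 - Real.exp (-lam * y)) ^ s)) :=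
  stmt_6_general a θ hθ hrad C hC α1 α2 α3 lam hα1 hα2 hα3 hlam y hy s hs
end

section
/- Let (a_n)_{n≥1} be a sequence of nonnegative reals, not all zero, such that C(x) = Σ_{n=1}^∞ a_n x^n converges for all x in (0, s) for some s > 0, and let c = min{ n ≥ 1 : a_n > 0 }. Then for every fixed t ∈ [0, 1], the limit as θ → 0⁺ of C(θ t) / C(θ) exists and equals t^c. (The limiting distribution of the BGEPS family as θ → 0⁺ is the BGE distribution with parameters c·α1, c·α2, c·α3 and λ.) -/
open Real Filter Topology

/-! Factor out the lowest-order term: `C x = x ^ c * g x` with `g x = ∑ a (n + c) x ^ n`, so that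
`C (θ t) / C θ = t ^ c * g (θ t) / g θ`. By dominated convergence `g` is continuous at `0` with
`g 0 = a c > 0`, hence the ratio tends to `t ^ c`. -/

theorem tsum_nat_add_eq_tsum_of_forall_lt {α : Type*} [AddCommMonoid α] [TopologicalSpace α]
    (f : ℕ → α) {k : ℕ} (hf : ∀ n < k, f n = 0) : ∑' n, f (n + k) = ∑' n, f n := by
  refine (add_left_injective k).tsum_eq fun n hn => ⟨n - k, ?_⟩
  exact Nat.sub_add_cancel (not_lt.mp fun h => hn (hf n h))

theorem tsum_mul_pow_succ_eq_pow_mul_tsum {𝕜 : Type*} [Field 𝕜] [TopologicalSpace 𝕜]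
    [IsTopologicalRing 𝕜] [T2Space 𝕜] (a : ℕ → 𝕜) {c : ℕ} (hc : 1 ≤ c)
    (hmin : ∀ n, 1 ≤ n → n < c → a n = 0) (x : 𝕜) :
    ∑' n, a (n + 1) * x ^ (n + 1) = x ^ c * ∑' n, a (n + c) * x ^ n := by
  rw [← tsum_nat_add_eq_tsum_of_forall_lt _ (k := c - 1)
    fun n hn => by rw [hmin (n + 1) (by omega) (by omega), zero_mul], ← tsum_mul_left]
  refine tsum_congr fun n => ?_
  rw [show n + (c - 1) + 1 = n + c by omega, pow_add]
  ring

theorem tendsto_tsum_mul_pow_nhds_zero {𝕜 : Type*} [NormedField 𝕜] [CompleteSpace 𝕜]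
    (b : ℕ → 𝕜) {r : ℝ} (hr : 0 < r) (hb : Summable fun n => ‖b n‖ * r ^ n) :
    Tendsto (fun x => ∑' n, b n * x ^ n) (𝓝 0) (𝓝 (b 0)) := by
  have hball : ∀ᶠ x : 𝕜 in 𝓝 0, ‖x‖ ≤ r := by
    filter_upwards [Metric.closedBall_mem_nhds (0 : 𝕜) hr] with x hx
    exact mem_closedBall_zero_iff.mp hx
  have h := tendsto_tsum_of_dominated_convergence (f := fun x n => b n * x ^ n)
    (g := fun n => b n * 0 ^ n) hb
    (fun n => (continuous_const.mul (continuous_pow n)).tendsto 0)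
    (hball.mono fun x hx n => by rw [norm_mul, norm_pow]; gcongr)
  rwa [tsum_eq_single 0 fun n hn => by simp [hn], pow_zero, mul_one] at h

theorem stmt_12_general (a : ℕ → ℝ) (ha : ∀ n, 0 ≤ a n)
    (s : ℝ) (hs : 0 < s)
    (hconv : ∀ x : ℝ, 0 < x → x < s → Summable fun n : ℕ => a (n + 1) * x ^ (n + 1))
    (C : ℝ → ℝ) (hC : ∀ x : ℝ, C x = ∑' n : ℕ, a (n + 1) * x ^ (n + 1))
    (c : ℕ) (hc1 : 1 ≤ c) (hac : 0 < a c)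
    (hmin : ∀ n : ℕ, 1 ≤ n → n < c → a n = 0)
    (t : ℝ) :
    Tendsto (fun θ : ℝ => C (θ * t) / C θ) (𝓝[>] (0 : ℝ)) (𝓝 (t ^ c)) := by
  set g : ℝ → ℝ := fun x => ∑' n, a (n + c) * x ^ n
  have hfactor (x : ℝ) : C x = x ^ c * g x :=
    (hC x).trans (tsum_mul_pow_succ_eq_pow_mul_tsum a hc1 hmin x)
  have hsum : Summable fun n => ‖a (n + c)‖ * (s / 2) ^ n := by
    have h := (summable_nat_add_iff (c - 1)).mpr (hconv (s / 2) (half_pos hs) (by linarith))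
    rw [← summable_mul_right_iff (pow_ne_zero c (half_pos hs).ne')]
    refine h.congr fun n => ?_
    rw [norm_of_nonneg (ha _), show n + (c - 1) + 1 = n + c by omega, pow_add, mul_assoc]
  have hg : Tendsto g (𝓝 0) (𝓝 (a c)) := by
    simpa using tendsto_tsum_mul_pow_nhds_zero (fun n => a (n + c)) (half_pos hs) hsum
  have hscale : Tendsto (fun θ : ℝ => θ * t) (𝓝 0) (𝓝 0) := by
    simpa using (continuous_mul_const t).tendsto 0
  have hlim := (tendsto_const_nhds (x := t ^ c)).mul ((hg.comp hscale).div hg hac.ne')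
  rw [div_self hac.ne', mul_one] at hlim
  refine (hlim.mono_left nhdsWithin_le_nhds).congr' (eventually_nhdsWithin_of_forall fun θ hθ => ?_)
  simp only [Pi.div_apply, Function.comp_apply, hfactor]
  rw [mul_pow, mul_assoc, mul_div_mul_left _ _ (pow_ne_zero c (ne_of_gt hθ)), mul_div_assoc]

/-- The limiting distribution of the BGEPS family as `θ → 0⁺` is BGE: if
`c = min{n ≥ 1 : a_n > 0}`, then for every `t ∈ [0,1]`,
`C(θ t)/C(θ) → t^c` as `θ → 0⁺`. -/
theorem stmt_12 (a : ℕ → ℝ) (ha : ∀ n, 0 ≤ a n)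
    (s : ℝ) (hs : 0 < s)
    (hconv : ∀ x : ℝ, 0 < x → x < s → Summable fun n : ℕ => a (n + 1) * x ^ (n + 1))
    (C : ℝ → ℝ) (hC : ∀ x : ℝ, C x = ∑' n : ℕ, a (n + 1) * x ^ (n + 1))
    (c : ℕ) (hc1 : 1 ≤ c) (hac : 0 < a c)
    (hmin : ∀ n : ℕ, 1 ≤ n → n < c → a n = 0)
    (t : ℝ) (ht : t ∈ Set.Icc (0 : ℝ) 1) :
    Tendsto (fun θ : ℝ => C (θ * t) / C θ) (𝓝[>] (0 : ℝ)) (𝓝 (t ^ c)) :=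
  stmt_12_general a ha s hs hconv C hC c hc1 hac hmin t
end

section
/- Let θ > 0 and α1, α2, α3, λ > 0, and set K = (1−e^{−λ y1})^{α1+α3}·(1−e^{−λ y2})^{α2}. For 0 < y1 < y2, the mixed second partial derivative ∂²/∂y1 ∂y2 of the function (y1, y2) ↦ (e^{θ K} − 1) / (e^{θ} − 1) equals (θ / (e^{θ} − 1)) · f_GE(y1; α1+α3, λ) · f_GE(y2; α2, λ) · e^{θ K} · (θ K + 1). (The absolutely continuous density f1 of the bivariate generalized exponential–Poisson (BGEP) distribution, i.e. the case C(θ) = e^{θ} − 1.) -/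
open Real Filter

/-- `K(y1,y2) = (1-e^{-λ y1})^{α1+α3} (1-e^{-λ y2})^{α2}`. -/
noncomputable def KK (α1 α3 α2 lam y1 y2 : ℝ) : ℝ :=
  (1 - Real.exp (-lam * y1)) ^ (α1 + α3) * (1 - Real.exp (-lam * y2)) ^ α2

/-
The cdf is `φ(K)` with `φ(k) = (e^{θk} - 1)/(e^θ - 1)` and `K` a product `G₁(y1) G₂(y2)` of
generalized exponential cdfs, whose derivatives are the `f_GE`. For any such product the chain
rule gives `∂₁∂₂ φ(G₁ G₂) = G₁' G₂' (φ'(K) + K φ''(K))`, and here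
`φ'(K) + K φ''(K) = θ e^{θK} (θK + 1)/(e^θ - 1)`.
-/

noncomputable def geCDF (x α lam : ℝ) : ℝ :=
  (1 - Real.exp (-lam * x)) ^ α

theorem hasDerivAt_geCDF {α lam x : ℝ} (hx : lam * x ≠ 0) :
    HasDerivAt (fun s => geCDF s α lam) (fGE x α lam) x := by
  have hbase : HasDerivAt (fun s => 1 - Real.exp (-lam * s)) (lam * Real.exp (-lam * x)) x := by
    simpa [mul_comm] using (((hasDerivAt_id x).const_mul (-lam)).exp).const_sub 1
  have hbase_ne : 1 - Real.exp (-lam * x) ≠ 0 := by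
    refine sub_ne_zero.mpr (Ne.symm fun h => hx ?_)
    rw [Real.exp_eq_one_iff, neg_mul, neg_eq_zero] at h
    exact h
  unfold geCDF
  convert hbase.rpow_const (p := α) (Or.inl hbase_ne) using 1
  unfold fGE
  ring

theorem KK_eq_geCDF_mul (α1 α3 α2 lam y1 y2 : ℝ) :
    KK α1 α3 α2 lam y1 y2 = geCDF y1 (α1 + α3) lam * geCDF y2 α2 lam :=
  rfl

theorem deriv_deriv_comp_mul_s14 {φ φ' φ'' g h : ℝ → ℝ} {g' h' x y : ℝ}
    (hφ : ∀ k, HasDerivAt φ (φ' k) k) (hφ' : ∀ k, HasDerivAt φ' (φ'' k) k)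
    (hg : HasDerivAt g g' x) (hh : HasDerivAt h h' y) :
    deriv (fun s => deriv (fun t => φ (g s * h t)) y) x =
      (φ' (g x * h y) + g x * h y * φ'' (g x * h y)) * g' * h' := by
  have hinner : ∀ s, deriv (fun t => φ (g s * h t)) y = φ' (g s * h y) * (g s * h') :=
    fun s => ((hφ _).comp y (hh.const_mul (g s))).deriv
  simp only [hinner]
  exact (((hφ' _).comp x (hg.mul_const (h y))).mul (hg.mul_const h')).deriv.trans
    (by rw [Function.comp_apply]; ring)

theorem stmt_14_general (θ : ℝ)
    (α1 α2 α3 lam : ℝ) (hlam : 0 < lam)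
    (y1 y2 : ℝ) (hy1 : 0 < y1) (h12 : y1 < y2) :
    deriv (fun t1 : ℝ =>
        deriv (fun t2 : ℝ =>
            (Real.exp (θ * KK α1 α3 α2 lam t1 t2) - 1) / (Real.exp θ - 1)) y2) y1 =
      θ / (Real.exp θ - 1) * fGE y1 (α1 + α3) lam * fGE y2 α2 lam *
        Real.exp (θ * KK α1 α3 α2 lam y1 y2) * (θ * KK α1 α3 α2 lam y1 y2 + 1) := by
  have hexp : ∀ k, HasDerivAt (fun k => Real.exp (θ * k)) (θ * Real.exp (θ * k)) k := fun k => by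
    simpa [mul_comm] using ((hasDerivAt_id k).const_mul θ).exp
  rw [KK_eq_geCDF_mul]
  exact (deriv_deriv_comp_mul_s14 (fun k => ((hexp k).sub_const 1).div_const (Real.exp θ - 1))
    (fun k => ((hexp k).const_mul θ).div_const (Real.exp θ - 1))
    (hasDerivAt_geCDF (mul_pos hlam hy1).ne')
    (hasDerivAt_geCDF (mul_pos hlam (hy1.trans h12)).ne')).trans (by ring)

/-- Density `f1` of the bivariate generalized exponential–Poisson (BGEP) distribution
(the BGEPS case `C(θ) = e^θ - 1`): for `0 < y1 < y2`,
`∂²/∂y1∂y2 [(e^{θK} - 1)/(e^θ - 1)]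
  = (θ/(e^θ - 1)) f_GE(y1; α1+α3, λ) f_GE(y2; α2, λ) e^{θK} (θK + 1)`. -/
theorem stmt_14 (θ : ℝ) (hθ0 : 0 < θ)
    (α1 α2 α3 lam : ℝ) (hα1 : 0 < α1) (hα2 : 0 < α2) (hα3 : 0 < α3) (hlam : 0 < lam)
    (y1 y2 : ℝ) (hy1 : 0 < y1) (h12 : y1 < y2) :
    deriv (fun t1 : ℝ =>
        deriv (fun t2 : ℝ =>
            (Real.exp (θ * KK α1 α3 α2 lam t1 t2) - 1) / (Real.exp θ - 1)) y2) y1 =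
      θ / (Real.exp θ - 1) * fGE y1 (α1 + α3) lam * fGE y2 α2 lam *
        Real.exp (θ * KK α1 α3 α2 lam y1 y2) * (θ * KK α1 α3 α2 lam y1 y2 + 1) :=
  stmt_14_general θ α1 α2 α3 lam hlam y1 y2 hy1 h12
end
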